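/- Let SD be an AL action description and M = ⟨σ0,a0,σ1,...,a_{n-1},σn⟩ a sequence with σ0 a state. Then M is a trajectory of the transition diagram described by SD if and only if M is defined by an answer set of the program β^n_d(M) consisting of the n-step direct encoding of SD, the facts h(l,0) for l ∈ σ0, and the occurrence facts o(a,t) for a ∈ a_t, 0 ≤ t < n. -/

import Mathlib

/-- A ground rule of A-Prolog: head (none = ⊥, i.e. a constraint),
positive body atoms, and default-negated body atoms. -/
structure ASPRule (L : Type) where
  head : Option L
  pos : Set L
  neg : Set L

/-- `Closed X Y P`: `Y` is closed under the Gelfond–Lifschitz reduct of `P`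
relative to `X`. -/
def Closed {L : Type} (X Y : Set L) (P : Set (ASPRule L)) : Prop :=
  ∀ r ∈ P, (∀ l ∈ r.neg, l ∉ X) → r.pos ⊆ Y → ∃ l, r.head = some l ∧ l ∈ Y

/-- `X` is an answer set of `P`: `X` is minimal among the sets closed under
the reduct `P^X`. -/
def AnswerSet {L : Type} (P : Set (ASPRule L)) (X : Set L) : Prop :=
  Closed X X P ∧ ∀ Y ⊆ X, Closed X Y P → Y = X

/-- A fact. -/
def fact {L : Type} (a : L) : ASPRule L := ⟨some a, ∅, ∅⟩
/-- A fluent literal: a fluent together with a sign (`true` = positive). -/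
abbrev FLit (F : Type) := F × Bool

/-- The complement of a fluent literal. -/
def fcompl {F : Type} (l : FLit F) : FLit F := (l.1, !l.2)

/-- A dynamic causal law `causes(act, hd, pre)`. -/
structure DynLaw (A F : Type) where
  act : A
  hd : FLit F
  pre : Set (FLit F)

/-- A static causal law `caused(hd, pre)`. -/
structure StatLaw (F : Type) where
  hd : FLit F
  pre : Set (FLit F)

/-- An executability condition `impossible_if(act, pre)`. -/
structure ImpLaw (A F : Type) where
  act : A
  pre : Set (FLit F)

/-- An action description of the language AL. -/
structure ActionDescr (A F : Type) where
  dyn : Set (DynLaw A F)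
  stat : Set (StatLaw F)
  imp : Set (ImpLaw A F)

/-- Completeness: each fluent or its negation belongs to `σ`. -/
def FComplete {F : Type} (σ : Set (FLit F)) : Prop :=
  ∀ f : F, (f, true) ∈ σ ∨ (f, false) ∈ σ

/-- Consistency: no fluent literal occurs together with its complement. -/
def FConsistent {F : Type} (σ : Set (FLit F)) : Prop :=
  ∀ l ∈ σ, fcompl l ∉ σ

/-- Closure under the static causal laws. -/
def ClosedStat {A F : Type} (D : ActionDescr A F) (σ : Set (FLit F)) : Prop :=
  ∀ s ∈ D.stat, s.pre ⊆ σ → s.hd ∈ σ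

/-- A state of the transition system described by `D`. -/
def IsState {A F : Type} (D : ActionDescr A F) (σ : Set (FLit F)) : Prop :=
  FComplete σ ∧ FConsistent σ ∧ ClosedStat D σ

/-- `Cn_Z(S)`: the smallest set of fluent literals containing `S` and closed
under the static causal laws of `D`. -/
def CnZ {A F : Type} (D : ActionDescr A F) (S : Set (FLit F)) : Set (FLit F) :=
  ⋂₀ { X | S ⊆ X ∧ ∀ s ∈ D.stat, s.pre ⊆ X → s.hd ∈ X }

/-- `E(a,σ)`: the direct effects of compound action `a` in `σ`. -/
def dirEff {A F : Type} (D : ActionDescr A F) (a : Set A) (σ : Set (FLit F)) :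
    Set (FLit F) :=
  { l | ∃ d ∈ D.dyn, d.act ∈ a ∧ d.pre ⊆ σ ∧ d.hd = l }

/-- The McCain–Turner transition relation: `⟨σ,a,σ'⟩` is a transition iff
`σ`,`σ'` are states, no executability condition for a member of `a` is
satisfied in `σ`, and `σ' = Cn_Z(E(a,σ) ∪ (σ ∩ σ'))`. -/
def ALTrans {A F : Type} (D : ActionDescr A F) (σ : Set (FLit F)) (a : Set A)
    (σ' : Set (FLit F)) : Prop :=
  IsState D σ ∧ IsState D σ' ∧
  (∀ i ∈ D.imp, i.act ∈ a → ¬ i.pre ⊆ σ) ∧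
  σ' = CnZ D (dirEff D a σ ∪ (σ ∩ σ'))

/-- Atoms of the direct encoding: `h(l,t)` and `o(a,t)`. -/
inductive AtomD (A F : Type) where
  | h : FLit F → ℕ → AtomD A F
  | o : A → ℕ → AtomD A F

/-- The `n`-step direct encoding `β^n_d(SD,M)` for a sequence `M` with initial
state `σ0` and actions `a t` (`t < n`): rules for dynamic laws, static laws,
executability conditions, inertia, consistency constraints, the facts
`h(l,0)` for `l ∈ σ0`, and the occurrence facts `o(e,t)` for `e ∈ a t`. -/
def betaNd {A F : Type} (D : ActionDescr A F) (n : ℕ) (σ0 : Set (FLit F))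
    (a : ℕ → Set A) : Set (ASPRule (AtomD A F)) :=
  { r | ∃ d ∈ D.dyn, ∃ t < n,
      r = ⟨some (AtomD.h d.hd (t+1)),
           (fun l => AtomD.h l t) '' d.pre ∪ {AtomD.o d.act t}, ∅⟩ } ∪
  { r | ∃ s ∈ D.stat, ∃ t ≤ n,
      r = ⟨some (AtomD.h s.hd t), (fun l => AtomD.h l t) '' s.pre, ∅⟩ } ∪
  { r | ∃ i ∈ D.imp, ∃ t < n,
      r = ⟨none, (fun l => AtomD.h l t) '' i.pre ∪ {AtomD.o i.act t}, ∅⟩ } ∪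
  { r | ∃ l : FLit F, ∃ t < n,
      r = ⟨some (AtomD.h l (t+1)), {AtomD.h l t}, {AtomD.h (fcompl l) (t+1)}⟩ } ∪
  { r | ∃ l : FLit F, ∃ t ≤ n,
      r = ⟨none, {AtomD.h l t, AtomD.h (fcompl l) t}, ∅⟩ } ∪
  { r | ∃ l ∈ σ0, r = fact (AtomD.h l 0) } ∪
  { r | ∃ t < n, ∃ e ∈ a t, r = fact (AtomD.o e t) }

/-- A set `X` of atoms defines the sequence `⟨σ0,a0,...,a_{n-1},σn⟩`. -/
def Defines {A F : Type} (n : ℕ) (X : Set (AtomD A F)) (σ : ℕ → Set (FLit F))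
    (a : ℕ → Set A) : Prop :=
  (∀ k ≤ n, σ k = { l | AtomD.h l k ∈ X }) ∧
  (∀ k < n, a k = { e | AtomD.o e k ∈ X })


/-!
For a trajectory, the atoms `h(l,t)` with `l ∈ σ_t` and `o(e,t)` with `e ∈ a_t` form a set closed
under its own reduct. It is minimal because, by induction on `t`, every set closed under the reduct
contains `σ_{t+1} = Cn_Z(E(a_t,σ_t) ∪ (σ_t ∩ σ_{t+1}))`: the dynamic rules yield the direct effects,
the inertia rules (whose default-negated premise holds since `σ_{t+1}` is consistent) the persisting
literals, and the static rules close the result under `Z`.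

Conversely, if `{l | h(l,0) ∈ X}` is a state for an answer set `X`, then so is every later slice
`σ_t = {l | h(l,t) ∈ X}`: complete by inertia, consistent by the constraints, closed by the static
rules. The dynamic and static rules give `Cn_Z(E ∪ (σ_t ∩ σ_{t+1})) ⊆ σ_{t+1}`; for the other
inclusion, removing from `X` the atoms `h(l,t+1)` with `l ∉ Cn_Z(E ∪ (σ_t ∩ σ_{t+1}))` leaves a set
still closed under the reduct, so by minimality nothing was removed.
-/

namespace Closed

variable {L : Type} {X Y : Set L} {P : Set (ASPRule L)}

theorem head_mem (hY : Closed X Y P) {x : L} {pos neg : Set L} (hr : ⟨some x, pos, neg⟩ ∈ P)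
    (hneg : ∀ l ∈ neg, l ∉ X) (hpos : pos ⊆ Y) : x ∈ Y := by
  obtain ⟨l, hl, hlY⟩ := hY _ hr hneg hpos
  cases hl
  exact hlY

theorem not_subset_of_constraint (hY : Closed X Y P) {pos neg : Set L}
    (hr : ⟨none, pos, neg⟩ ∈ P) (hneg : ∀ l ∈ neg, l ∉ X) : ¬ pos ⊆ Y := fun hpos => by
  obtain ⟨l, hl, -⟩ := hY _ hr hneg hpos
  cases hl

theorem fact_mem (hY : Closed X Y P) {x : L} (hr : fact x ∈ P) : x ∈ Y :=
  hY.head_mem hr (fun _ h => h.elim) (Set.empty_subset _)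

theorem sdiff (hX : Closed X X P) {R : Set L}
    (hR : ∀ r ∈ P, (∀ l ∈ r.neg, l ∉ X) → r.pos ⊆ X \ R → ∀ x ∈ R, r.head ≠ some x) :
    Closed X (X \ R) P := by
  intro r hr hneg hpos
  obtain ⟨x, hx, hxX⟩ := hX r hr hneg (hpos.trans Set.sdiff_subset)
  exact ⟨x, hx, hxX, fun hxR => hR r hr hneg hpos x hxR hx⟩

end Closed

section CnZ

variable {A F : Type} (D : ActionDescr A F)

theorem subset_CnZ (S : Set (FLit F)) : S ⊆ CnZ D S :=
  fun _ hl _ hX => hX.1 hl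

theorem CnZ_subset_of_closedStat {S T : Set (FLit F)} (hST : S ⊆ T) (hT : ClosedStat D T) :
    CnZ D S ⊆ T :=
  fun _ hl => hl T ⟨hST, hT⟩

theorem closedStat_CnZ (S : Set (FLit F)) : ClosedStat D (CnZ D S) :=
  fun s hs hpre X hX => hX.2 s hs fun _ hl => hpre hl X hX

end CnZ

theorem FComplete.mem_of_fcompl_notMem {F : Type} {σ : Set (FLit F)} (hσ : FComplete σ)
    {l : FLit F} (h : fcompl l ∉ σ) : l ∈ σ := by
  obtain ⟨f, _ | _⟩ := l <;> rcases hσ f with h' | h' <;> simp_all [fcompl]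

section Rules

variable {A F : Type} {D : ActionDescr A F} {n : ℕ} {σ0 : Set (FLit F)} {a : ℕ → Set A}

theorem dynRule_mem_betaNd {d : DynLaw A F} (hd : d ∈ D.dyn) {t : ℕ} (ht : t < n) :
    (⟨some (AtomD.h d.hd (t+1)), (fun l => AtomD.h l t) '' d.pre ∪ {AtomD.o d.act t}, ∅⟩ :
      ASPRule (AtomD A F)) ∈ betaNd D n σ0 a := by
  simp only [betaNd, Set.mem_union]
  exact Or.inl (Or.inl (Or.inl (Or.inl (Or.inl (Or.inl ⟨d, hd, t, ht, rfl⟩)))))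

theorem statRule_mem_betaNd {s : StatLaw F} (hs : s ∈ D.stat) {t : ℕ} (ht : t ≤ n) :
    (⟨some (AtomD.h s.hd t), (fun l => AtomD.h l t) '' s.pre, ∅⟩ : ASPRule (AtomD A F))
      ∈ betaNd D n σ0 a := by
  simp only [betaNd, Set.mem_union]
  exact Or.inl (Or.inl (Or.inl (Or.inl (Or.inl (Or.inr ⟨s, hs, t, ht, rfl⟩)))))

theorem impRule_mem_betaNd {i : ImpLaw A F} (hi : i ∈ D.imp) {t : ℕ} (ht : t < n) :
    (⟨none, (fun l => AtomD.h l t) '' i.pre ∪ {AtomD.o i.act t}, ∅⟩ : ASPRule (AtomD A F))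
      ∈ betaNd D n σ0 a := by
  simp only [betaNd, Set.mem_union]
  exact Or.inl (Or.inl (Or.inl (Or.inl (Or.inr ⟨i, hi, t, ht, rfl⟩))))

theorem inertiaRule_mem_betaNd (l : FLit F) {t : ℕ} (ht : t < n) :
    (⟨some (AtomD.h l (t+1)), {AtomD.h l t}, {AtomD.h (fcompl l) (t+1)}⟩ :
      ASPRule (AtomD A F)) ∈ betaNd D n σ0 a := by
  simp only [betaNd, Set.mem_union]
  exact Or.inl (Or.inl (Or.inl (Or.inr ⟨l, t, ht, rfl⟩)))

theorem consistencyRule_mem_betaNd (l : FLit F) {t : ℕ} (ht : t ≤ n) :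
    (⟨none, {AtomD.h l t, AtomD.h (fcompl l) t}, ∅⟩ : ASPRule (AtomD A F))
      ∈ betaNd D n σ0 a := by
  simp only [betaNd, Set.mem_union]
  exact Or.inl (Or.inl (Or.inr ⟨l, t, ht, rfl⟩))

theorem initFact_mem_betaNd {l : FLit F} (hl : l ∈ σ0) :
    (fact (AtomD.h l 0) : ASPRule (AtomD A F)) ∈ betaNd D n σ0 a := by
  simp only [betaNd, Set.mem_union]
  exact Or.inl (Or.inr ⟨l, hl, rfl⟩)

theorem occFact_mem_betaNd {e : A} {t : ℕ} (ht : t < n) (he : e ∈ a t) :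
    (fact (AtomD.o e t) : ASPRule (AtomD A F)) ∈ betaNd D n σ0 a := by
  simp only [betaNd, Set.mem_union]
  exact Or.inr ⟨t, ht, e, he, rfl⟩

end Rules

section Slices

variable {A F : Type} {D : ActionDescr A F} {n : ℕ} {σ0 : Set (FLit F)} {a : ℕ → Set A}
  {X Y : Set (AtomD A F)} {t : ℕ}

def holdsAt (Y : Set (AtomD A F)) (t : ℕ) : Set (FLit F) := {l | AtomD.h l t ∈ Y}

def occursAt (Y : Set (AtomD A F)) (t : ℕ) : Set A := {e | AtomD.o e t ∈ Y}

theorem closedStat_holdsAt (hY : Closed X Y (betaNd D n σ0 a)) (ht : t ≤ n) :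
    ClosedStat D (holdsAt Y t) := fun s hs hpre =>
  hY.head_mem (statRule_mem_betaNd hs ht) (fun _ h => h.elim)
    (by rintro _ ⟨l, hl, rfl⟩; exact hpre hl)

theorem fConsistent_holdsAt (hY : Closed X Y (betaNd D n σ0 a)) (ht : t ≤ n) :
    FConsistent (holdsAt Y t) := fun l hl hlc =>
  hY.not_subset_of_constraint (consistencyRule_mem_betaNd l ht) (fun _ h => h.elim)
    (Set.insert_subset hl (Set.singleton_subset_iff.2 hlc))

theorem not_pre_subset_holdsAt (hY : Closed X Y (betaNd D n σ0 a)) (ht : t < n)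
    {i : ImpLaw A F} (hi : i ∈ D.imp) (hact : i.act ∈ occursAt Y t) :
    ¬ i.pre ⊆ holdsAt Y t := fun hpre =>
  hY.not_subset_of_constraint (impRule_mem_betaNd hi ht) (fun _ h => h.elim)
    (Set.union_subset (by rintro _ ⟨l, hl, rfl⟩; exact hpre hl) (Set.singleton_subset_iff.2 hact))

theorem dirEff_subset_holdsAt (hY : Closed X Y (betaNd D n σ0 a)) (ht : t < n) {b : Set A}
    {σ : Set (FLit F)} (hb : b ⊆ occursAt Y t) (hσ : σ ⊆ holdsAt Y t) :
    dirEff D b σ ⊆ holdsAt Y (t+1) := by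
  rintro _ ⟨d, hd, hact, hpre, rfl⟩
  refine hY.head_mem (dynRule_mem_betaNd hd ht) (fun _ h => h.elim) (Set.union_subset ?_ ?_)
  · rintro _ ⟨l, hl, rfl⟩
    exact hσ (hpre hl)
  · exact Set.singleton_subset_iff.2 (hb hact)

theorem mem_holdsAt_succ_of_inertia (hY : Closed X Y (betaNd D n σ0 a)) (ht : t < n)
    {l : FLit F} (hl : l ∈ holdsAt Y t) (hc : fcompl l ∉ holdsAt X (t+1)) :
    l ∈ holdsAt Y (t+1) :=
  hY.head_mem (inertiaRule_mem_betaNd l ht) (by rintro _ rfl; exact hc)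
    (Set.singleton_subset_iff.2 hl)

end Slices

section AnswerSetToTrajectory

variable {A F : Type} {D : ActionDescr A F} {n : ℕ} {σ0 : Set (FLit F)} {a : ℕ → Set A}
  {X : Set (AtomD A F)} {t : ℕ}

theorem fComplete_holdsAt_succ (hX : Closed X X (betaNd D n σ0 a)) (ht : t < n)
    (hσ : FComplete (holdsAt X t)) : FComplete (holdsAt X (t+1)) := by
  intro f
  rcases hσ f with hl | hl
  · exact or_iff_not_imp_right.2 (mem_holdsAt_succ_of_inertia hX ht hl)
  · exact or_iff_not_imp_left.2 (mem_holdsAt_succ_of_inertia hX ht hl)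

theorem isState_holdsAt (hX : Closed X X (betaNd D n σ0 a)) (h0 : IsState D (holdsAt X 0)) :
    ∀ t ≤ n, IsState D (holdsAt X t)
  | 0, _ => h0
  | t+1, ht =>
    ⟨fComplete_holdsAt_succ hX ht (isState_holdsAt hX h0 t (Nat.le_of_succ_le ht)).1,
      fConsistent_holdsAt hX ht, closedStat_holdsAt hX ht⟩

theorem mem_CnZ_of_head_eq (hc : FComplete (holdsAt X (t+1))) {r : ASPRule (AtomD A F)}
    (hr : r ∈ betaNd D n σ0 a) (hneg : ∀ x ∈ r.neg, x ∉ X)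
    (hpos : r.pos ⊆ X \ (fun l => AtomD.h l (t+1)) ''
      (CnZ D (dirEff D (occursAt X t) (holdsAt X t) ∪ (holdsAt X t ∩ holdsAt X (t+1))))ᶜ)
    {l : FLit F} (hhead : r.head = some (AtomD.h l (t+1))) :
    l ∈ CnZ D (dirEff D (occursAt X t) (holdsAt X t) ∪ (holdsAt X t ∩ holdsAt X (t+1))) := by
  simp only [betaNd, Set.mem_union] at hr
  rcases hr with ((((((⟨d, hd, t', -, rfl⟩ | ⟨s, hs, t', -, rfl⟩) | ⟨i, -, t', -, rfl⟩) |
    ⟨l', t', -, rfl⟩) | ⟨l', t', -, rfl⟩) | ⟨l', -, rfl⟩) | ⟨t', -, e, -, rfl⟩) <;>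
    simp only [fact, Option.some.injEq, AtomD.h.injEq, reduceCtorEq, Nat.add_right_cancel_iff,
      and_false] at hhead
  · obtain ⟨rfl, rfl⟩ := hhead
    exact subset_CnZ D _ (Or.inl ⟨d, hd, (hpos (Or.inr rfl)).1,
      fun l hl => (hpos (Or.inl ⟨l, hl, rfl⟩)).1, rfl⟩)
  · obtain ⟨rfl, rfl⟩ := hhead
    exact closedStat_CnZ D _ s hs fun l' hl' =>
      by_contra fun hl'C => (hpos ⟨l', hl', rfl⟩).2 ⟨l', hl'C, rfl⟩
  · obtain ⟨rfl, rfl⟩ := hhead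
    exact subset_CnZ D _ (Or.inr ⟨(hpos rfl).1, hc.mem_of_fcompl_notMem (hneg _ rfl)⟩)

theorem holdsAt_succ_subset_CnZ (hX : AnswerSet (betaNd D n σ0 a) X)
    (hc : FComplete (holdsAt X (t+1))) :
    holdsAt X (t+1) ⊆
      CnZ D (dirEff D (occursAt X t) (holdsAt X t) ∪ (holdsAt X t ∩ holdsAt X (t+1))) := by
  set C := CnZ D (dirEff D (occursAt X t) (holdsAt X t) ∪ (holdsAt X t ∩ holdsAt X (t+1)))
  have hclosed : Closed X (X \ (fun l => AtomD.h l (t+1)) '' Cᶜ) (betaNd D n σ0 a) :=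
    hX.1.sdiff fun r hr hneg hpos => by
      rintro _ ⟨l, hlC, rfl⟩ hhead
      exact hlC (mem_CnZ_of_head_eq hc hr hneg hpos hhead)
  have hfull := hX.2 _ Set.sdiff_subset hclosed
  intro l hl
  by_contra hlC
  rw [holdsAt, Set.mem_ofPred_eq, ← hfull] at hl
  exact hl.2 ⟨l, hlC, rfl⟩

theorem alTrans_holdsAt (hX : AnswerSet (betaNd D n σ0 a) X) (h0 : IsState D (holdsAt X 0))
    (ht : t < n) : ALTrans D (holdsAt X t) (occursAt X t) (holdsAt X (t+1)) := by
  have hσ' := isState_holdsAt hX.1 h0 (t+1) ht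
  refine ⟨isState_holdsAt hX.1 h0 t ht.le, hσ', fun i hi => not_pre_subset_holdsAt hX.1 ht hi,
    (holdsAt_succ_subset_CnZ hX hσ'.1).antisymm ?_⟩
  exact CnZ_subset_of_closedStat D
    (Set.union_subset (dirEff_subset_holdsAt hX.1 ht le_rfl le_rfl) Set.inter_subset_right)
    (closedStat_holdsAt hX.1 ht)

end AnswerSetToTrajectory

section TrajectoryToAnswerSet

variable {A F : Type} {D : ActionDescr A F} {n : ℕ} {σ : ℕ → Set (FLit F)} {a : ℕ → Set A}

def seqAtoms (n : ℕ) (σ : ℕ → Set (FLit F)) (a : ℕ → Set A) : Set (AtomD A F)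
  | AtomD.h l t => t ≤ n ∧ l ∈ σ t
  | AtomD.o e t => t < n ∧ e ∈ a t

theorem defines_seqAtoms : Defines n (seqAtoms n σ a) σ a :=
  ⟨fun _ hk => Set.ext fun _ => ⟨fun hl => ⟨hk, hl⟩, And.right⟩,
    fun _ hk => Set.ext fun _ => ⟨fun he => ⟨hk, he⟩, And.right⟩⟩

theorem isState_of_trajectory (hσ0 : IsState D (σ 0))
    (hT : ∀ t < n, ALTrans D (σ t) (a t) (σ (t+1))) : ∀ t ≤ n, IsState D (σ t)
  | 0, _ => hσ0
  | t+1, ht => (hT t ht).2.1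

theorem subset_holdsAt_succ {σ0 : Set (FLit F)} {X Y : Set (AtomD A F)}
    (hY : Closed X Y (betaNd D n σ0 a)) {t : ℕ} (ht : t < n) {s s' : Set (FLit F)} {b : Set A}
    (hss' : ALTrans D s b s') (hb : b ⊆ occursAt Y t) (hs : s ⊆ holdsAt Y t)
    (hX : holdsAt X (t+1) ⊆ s') : s' ⊆ holdsAt Y (t+1) := by
  rw [hss'.2.2.2]
  refine CnZ_subset_of_closedStat D (Set.union_subset (dirEff_subset_holdsAt hY ht hb hs) ?_)
    (closedStat_holdsAt hY ht)
  rintro l ⟨hl, hl'⟩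
  exact mem_holdsAt_succ_of_inertia hY ht (hs hl) fun hc => hss'.2.1.2.1 l hl' (hX hc)

theorem closed_seqAtoms (hσ0 : IsState D (σ 0))
    (hT : ∀ t < n, ALTrans D (σ t) (a t) (σ (t+1))) :
    Closed (seqAtoms n σ a) (seqAtoms n σ a) (betaNd D n (σ 0) a) := by
  intro r hr hneg hpos
  have hstate := isState_of_trajectory hσ0 hT
  simp only [betaNd, Set.mem_union] at hr
  rcases hr with ((((((⟨d, hd, t, ht, rfl⟩ | ⟨s, hs, t, ht, rfl⟩) | ⟨i, hi, t, ht, rfl⟩) |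
    ⟨l, t, ht, rfl⟩) | ⟨l, t, ht, rfl⟩) | ⟨l, hl, rfl⟩) | ⟨t, ht, e, he, rfl⟩)
  · refine ⟨_, rfl, ht, ?_⟩
    rw [(hT t ht).2.2.2]
    exact subset_CnZ D _ (Or.inl ⟨d, hd, (hpos (Or.inr rfl)).2,
      fun l hl => (hpos (Or.inl ⟨l, hl, rfl⟩)).2, rfl⟩)
  · exact ⟨_, rfl, ht, (hstate t ht).2.2 s hs fun l hl => (hpos ⟨l, hl, rfl⟩).2⟩
  · exact ((hT t ht).2.2.1 i hi (hpos (Or.inr rfl)).2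
      fun l hl => (hpos (Or.inl ⟨l, hl, rfl⟩)).2).elim
  · exact ⟨_, rfl, ht,
      (hstate (t+1) ht).1.mem_of_fcompl_notMem fun hc => hneg _ rfl ⟨ht, hc⟩⟩
  · exact ((hstate t ht).2.1 l (hpos (Or.inl rfl)).2 (hpos (Or.inr rfl)).2).elim
  · exact ⟨_, rfl, Nat.zero_le n, hl⟩
  · exact ⟨_, rfl, ht, he⟩

theorem seqAtoms_subset_of_closed (hT : ∀ t < n, ALTrans D (σ t) (a t) (σ (t+1)))
    {Y : Set (AtomD A F)} (hY : Closed (seqAtoms n σ a) Y (betaNd D n (σ 0) a)) :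
    seqAtoms n σ a ⊆ Y := by
  have hocc : ∀ t < n, a t ⊆ occursAt Y t := fun t ht e he =>
    hY.fact_mem (occFact_mem_betaNd ht he)
  have hholds : ∀ t ≤ n, σ t ⊆ holdsAt Y t := by
    intro t
    induction t with
    | zero => exact fun _ l hl => hY.fact_mem (initFact_mem_betaNd hl)
    | succ t ih =>
      exact fun ht => subset_holdsAt_succ hY ht (hT t ht) (hocc t ht)
        (ih (Nat.le_of_succ_le ht)) fun _ hl => hl.2
  rintro (⟨l, t⟩ | ⟨e, t⟩) ⟨ht, hx⟩
  · exact hholds t ht hx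
  · exact hocc t ht hx

theorem answerSet_seqAtoms (hσ0 : IsState D (σ 0))
    (hT : ∀ t < n, ALTrans D (σ t) (a t) (σ (t+1))) :
    AnswerSet (betaNd D n (σ 0) a) (seqAtoms n σ a) :=
  ⟨closed_seqAtoms hσ0 hT, fun _ hYX hY => hYX.antisymm (seqAtoms_subset_of_closed hT hY)⟩

end TrajectoryToAnswerSet

/-- if `σ 0` is a state, the sequence
`M = ⟨σ0,a0,σ1,...,a_{n-1},σn⟩` is a trajectory of the transition diagram
described by `SD` iff `M` is defined by an answer set of `β^n_d(M)`. -/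
theorem betaNd_trajectory {A F : Type} (D : ActionDescr A F) (n : ℕ)
    (σ : ℕ → Set (FLit F)) (a : ℕ → Set A) (hσ0 : IsState D (σ 0)) :
    (∀ t < n, ALTrans D (σ t) (a t) (σ (t+1))) ↔
      ∃ X : Set (AtomD A F), AnswerSet (betaNd D n (σ 0) a) X ∧ Defines n X σ a := by
  refine ⟨fun hT => ⟨seqAtoms n σ a, answerSet_seqAtoms hσ0 hT, defines_seqAtoms⟩, ?_⟩
  rintro ⟨X, hX, hσX, haX⟩ t ht
  rw [hσX 0 (Nat.zero_le n)] at hσ0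
  rw [hσX t ht.le, hσX (t+1) ht, haX t ht]
  exact alTrans_holdsAt hX hσ0 ht
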